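/- For independent exponential rate-1 random variables X (max of M₁ i.i.d.) and Y (max of M₂ i.i.d.), the probability P(X ≤ a + b/Y) admits the closed form 2M₂ Σ_{q=0}^{M₂-1} [ (-1)^q C(M₂-1,q)/(2(q+1)) + Σ_{p=1}^{M₁} C(M₂-1,q) C(M₁,p) (-1)^{q+p} e^{-pa} √(pb/(q+1)) K₁(2√(p(q+1)b)) ]. -/

import Mathlib

open MeasureTheory ProbabilityTheory

/-- Modified Bessel function of the second kind of order 1 (integral representation). -/
noncomputable def besselK1 (z : ℝ) : ℝ :=
  (z / 4) * ∫ t in Set.Ioi (0 : ℝ), t ^ (-(2 : ℝ)) * Real.exp (-t - z ^ 2 / (4 * t))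

open Real Set

/-!
Independence and the density of `Y` give `P(X ≤ a + b/Y) = ∫₀^∞ f_{M₂}(y) F_{M₁}(a + b/y) dy`,
where `F_M(c) = (1 - e^{-c})^M` is the distribution function of a maximum of `M` standard
exponentials and `f_M = F_M'`. Expanding `(1 - e^{-y})^{M₂-1}` and `(1 - e^{-a} e^{-b/y})^{M₁}`
binomially turns the integrand into a finite combination of `exp (-(q+1) y - p b / y)`. For `p = 0`
this integrates to `1/(q+1)`; for `p ≥ 1` the substitution `y = p b / t` turns it into the integral
representation of `K₁`, giving `2 √(p b / (q+1)) K₁ (2 √(p (q+1) b))`.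
-/

/-- `pdf` only sees the absolutely continuous part of the law; a density of total mass one leaves
no room for a singular part. -/
lemma map_eq_withDensity_of_pdf_ae_eq {Ω E : Type*} [MeasurableSpace Ω] [MeasurableSpace E]
    {P : Measure Ω} [IsProbabilityMeasure P] {μ : Measure E} {X : Ω → E} (hX : AEMeasurable X P)
    {f : E → ENNReal} (hf : ∫⁻ x, f x ∂μ = 1) (hpdf : pdf X P μ =ᵐ[μ] f) :
    P.map X = μ.withDensity f := by
  have : IsProbabilityMeasure (P.map X) := Measure.isProbabilityMeasure_map hX
  have : IsProbabilityMeasure (μ.withDensity f) :=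
    ⟨by rw [withDensity_apply _ MeasurableSet.univ, Measure.restrict_univ, hf]⟩
  exact (Measure.eq_of_le_of_isProbabilityMeasure
    (withDensity_congr_ae hpdf ▸ withDensity_pdf_le_map X P μ)).symm

lemma ProbabilityTheory.IndepFun.measure_le_comp_eq_lintegral_mul {Ω : Type*}
    [MeasurableSpace Ω] {P : Measure Ω} [IsFiniteMeasure P] {X Y : Ω → ℝ}
    (hind : IndepFun X Y P) (hX : Measurable X) (hY : Measurable Y) {h : ℝ → ℝ}
    (hh : Measurable h) {f : ℝ → ENNReal} (hf : Measurable f)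
    (hlawY : P.map Y = volume.withDensity f) :
    P {ω | X ω ≤ h (Y ω)} = ∫⁻ y, f y * P.map X (Iic (h y)) := by
  have hS : MeasurableSet {z : ℝ × ℝ | z.2 ≤ h z.1} :=
    measurableSet_le measurable_snd (hh.comp measurable_fst)
  have hcdf : Measurable fun y => P.map X (Iic (h y)) :=
    (Monotone.measurable fun _ _ hcd => measure_mono (Iic_subset_Iic.2 hcd)).comp hh
  rw [show {ω | X ω ≤ h (Y ω)} = (fun ω => (Y ω, X ω)) ⁻¹' {z | z.2 ≤ h z.1} from rfl,
    ← Measure.map_apply (hY.prodMk hX) hS,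
    (indepFun_iff_map_prod_eq_prod_map_map hY.aemeasurable hX.aemeasurable).1 hind.symm,
    Measure.prod_apply hS, hlawY]
  exact lintegral_withDensity_eq_lintegral_mul _ hf hcdf

lemma one_sub_pow_eq_sum {R : Type*} [CommRing R] (t : R) (n : ℕ) :
    (1 - t) ^ n = ∑ k ∈ Finset.range (n + 1), (-1) ^ k * (n.choose k : R) * t ^ k := by
  rw [sub_eq_add_neg, add_comm, add_pow]
  refine Finset.sum_congr rfl fun k _ => ?_
  rw [one_pow, mul_one, neg_pow]
  ring

lemma integrableOn_exp_neg_mul_sub_div {r s : ℝ} (hr : 0 < r) (hs : 0 ≤ s) :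
    IntegrableOn (fun y => exp (-(r * y) - s / y)) (Ioi 0) := by
  refine (integrableOn_exp_mul_Ioi (neg_lt_zero.2 hr) 0).mono' (by fun_prop) ?_
  filter_upwards [ae_restrict_mem measurableSet_Ioi] with y (hy : 0 < y)
  rw [norm_of_nonneg (exp_pos _).le, neg_mul, exp_le_exp]
  linarith [div_nonneg hs hy.le]

lemma integral_exp_neg_mul_Ioi {r : ℝ} (hr : 0 < r) : ∫ y in Ioi 0, exp (-(r * y)) = r⁻¹ := by
  simp_rw [← neg_mul]
  rw [integral_exp_mul_Ioi (neg_lt_zero.2 hr), mul_zero, exp_zero, neg_div_neg_eq, one_div]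

lemma besselK1_two_mul_sqrt {c : ℝ} (hc : 0 ≤ c) :
    besselK1 (2 * √c) = √c / 2 * ∫ u in Ioi 0, exp (-(c * u) - 1 / u) := by
  rw [besselK1, ← integral_comp_rpow_Ioi _ (p := -1) (by norm_num)]
  congr 1
  · ring
  refine setIntegral_congr_fun measurableSet_Ioi fun t (ht : 0 < t) => ?_
  rw [mul_pow, sq_sqrt hc, rpow_neg_one, smul_eq_mul, abs_neg, abs_one, one_mul, inv_rpow ht.le,
    ← mul_assoc, show (-1 - 1 : ℝ) = -2 by norm_num, mul_inv_cancel₀ (rpow_pos_of_pos ht _).ne',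
    one_mul]
  field_simp
  ring_nf

lemma integral_exp_neg_mul_sub_div_eq_mul {r s : ℝ} (hs : 0 < s) :
    ∫ y in Ioi 0, exp (-(r * y) - s / y) = s * ∫ u in Ioi 0, exp (-(r * s * u) - 1 / u) := by
  have hscale := integral_comp_mul_left_Ioi (fun y => exp (-(r * y) - s / y)) 0 hs
  rw [mul_zero, smul_eq_mul] at hscale
  have hJ : ∫ u in Ioi 0, exp (-(r * s * u) - 1 / u) =
      ∫ u in Ioi 0, exp (-(r * (s * u)) - s / (s * u)) := by
    refine setIntegral_congr_fun measurableSet_Ioi fun u _ => ?_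
    rw [div_mul_cancel_left₀ hs.ne', mul_assoc, one_div]
  rw [hJ, hscale, ← mul_assoc, mul_inv_cancel₀ hs.ne', one_mul]

lemma integral_exp_neg_mul_sub_div {r s : ℝ} (hr : 0 < r) (hs : 0 < s) :
    ∫ y in Ioi 0, exp (-(r * y) - s / y) = 2 * √(s / r) * besselK1 (2 * √(r * s)) := by
  have hsqrt : √(s / r) * √(r * s) = s := by
    rw [← sqrt_mul (by positivity), show s / r * (r * s) = s * s by field_simp, sqrt_mul_self hs.le]
  rw [integral_exp_neg_mul_sub_div_eq_mul hs, besselK1_two_mul_sqrt (by positivity)]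
  linear_combination (∫ u in Ioi 0, exp (-(r * s * u) - 1 / u)) * hsqrt.symm

noncomputable def maxExpDensity (M : ℕ) (x : ℝ) : ℝ :=
  if 0 < x then (M : ℝ) * (1 - exp (-x)) ^ (M - 1) * exp (-x) else 0

lemma maxExpDensity_of_nonpos {M : ℕ} {x : ℝ} (hx : x ≤ 0) : maxExpDensity M x = 0 :=
  if_neg hx.not_gt

lemma maxExpDensity_of_pos {M : ℕ} {x : ℝ} (hx : 0 < x) :
    maxExpDensity M x = (M : ℝ) * (1 - exp (-x)) ^ (M - 1) * exp (-x) :=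
  if_pos hx

lemma hasDerivAt_one_sub_exp_neg_pow (M : ℕ) (x : ℝ) :
    HasDerivAt (fun x => (1 - exp (-x)) ^ M)
      ((M : ℝ) * (1 - exp (-x)) ^ (M - 1) * exp (-x)) x := by
  simpa using (((hasDerivAt_neg x).exp).const_sub 1).fun_pow M

lemma one_sub_exp_neg_nonneg {x : ℝ} (hx : 0 ≤ x) : 0 ≤ 1 - exp (-x) := by
  simp [hx]

lemma maxExpDensity_nonneg (M : ℕ) (x : ℝ) : 0 ≤ maxExpDensity M x := by
  rcases le_or_gt x 0 with hx | hx
  · rw [maxExpDensity_of_nonpos hx]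
  · rw [maxExpDensity_of_pos hx]
    have := one_sub_exp_neg_nonneg hx.le
    positivity

lemma maxExpDensity_le_indicator (M : ℕ) (x : ℝ) :
    maxExpDensity M x ≤ (Ioi 0).indicator (fun x => M * exp (-x)) x := by
  rcases le_or_gt x 0 with hx | hx
  · simp [maxExpDensity_of_nonpos hx, hx]
  · rw [maxExpDensity_of_pos hx, indicator_of_mem (mem_Ioi.2 hx)]
    have h1 : (1 - exp (-x)) ^ (M - 1) ≤ 1 :=
      pow_le_one₀ (one_sub_exp_neg_nonneg hx.le) (by simp [(exp_pos _).le])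
    calc _ = (M : ℝ) * exp (-x) * (1 - exp (-x)) ^ (M - 1) := by ring
      _ ≤ M * exp (-x) := mul_le_of_le_one_right (by positivity) h1

@[fun_prop]
lemma measurable_maxExpDensity (M : ℕ) : Measurable (maxExpDensity M) :=
  Measurable.ite measurableSet_Ioi (by fun_prop) measurable_const

lemma integrable_maxExpDensity (M : ℕ) : Integrable (maxExpDensity M) := by
  have hexp : IntegrableOn (fun x : ℝ => M * exp (-x)) (Ioi 0) :=
    (integrableOn_exp_neg_Ioi 0).const_mul _
  refine Integrable.mono' ((integrable_indicator_iff measurableSet_Ioi).2 hexp)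
    (by fun_prop) (.of_forall fun x => ?_)
  rw [Real.norm_of_nonneg (maxExpDensity_nonneg M x)]
  exact maxExpDensity_le_indicator M x

lemma integral_maxExpDensity {M : ℕ} (hM : 0 < M) : ∫ x, maxExpDensity M x = 1 := by
  rw [← setIntegral_eq_integral_of_forall_compl_eq_zero
    (s := Ioi 0) fun x hx => maxExpDensity_of_nonpos (not_lt.1 hx)]
  have hlim : Filter.Tendsto (fun x : ℝ => (1 - exp (-x)) ^ M) Filter.atTop (nhds 1) := by
    simpa using ((tendsto_exp_neg_atTop_nhds_zero.const_sub 1).pow M)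
  have hcont : Continuous fun x : ℝ => (1 - exp (-x)) ^ M := by fun_prop
  rw [integral_Ioi_of_hasDerivAt_of_tendsto hcont.continuousWithinAt
    (fun x hx => maxExpDensity_of_pos hx ▸ hasDerivAt_one_sub_exp_neg_pow M x)
    (integrable_maxExpDensity M).integrableOn hlim]
  simp [hM.ne']

lemma setIntegral_Iic_maxExpDensity {M : ℕ} (hM : 0 < M) {c : ℝ} (hc : 0 ≤ c) :
    ∫ x in Iic c, maxExpDensity M x = (1 - exp (-c)) ^ M := by
  have hint := integrable_maxExpDensity M
  have hzero : ∫ x in Iic 0, maxExpDensity M x = 0 :=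
    setIntegral_eq_zero_of_forall_eq_zero fun x hx => maxExpDensity_of_nonpos hx
  rw [← sub_zero (∫ x in Iic c, _), ← hzero,
    intervalIntegral.integral_Iic_sub_Iic hint.integrableOn hint.integrableOn,
    intervalIntegral.integral_eq_sub_of_hasDerivAt_of_le hc (by fun_prop)
    (fun x hx => maxExpDensity_of_pos hx.1 ▸ hasDerivAt_one_sub_exp_neg_pow M x)
    hint.intervalIntegrable]
  simp [hM.ne']

lemma lintegral_ofReal_maxExpDensity {M : ℕ} (hM : 0 < M) :
    ∫⁻ x, ENNReal.ofReal (maxExpDensity M x) = 1 := by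
  rw [← ofReal_integral_eq_lintegral_ofReal (integrable_maxExpDensity M)
    (.of_forall (maxExpDensity_nonneg M)), integral_maxExpDensity hM, ENNReal.ofReal_one]

lemma withDensity_maxExpDensity_Iic {M : ℕ} (hM : 0 < M) {c : ℝ} (hc : 0 ≤ c) :
    volume.withDensity (fun x => ENNReal.ofReal (maxExpDensity M x)) (Iic c) =
      ENNReal.ofReal ((1 - exp (-c)) ^ M) := by
  rw [withDensity_apply _ measurableSet_Iic, ← ofReal_integral_eq_lintegral_ofReal
    (integrable_maxExpDensity M).integrableOn (.of_forall (maxExpDensity_nonneg M)),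
    setIntegral_Iic_maxExpDensity hM hc]

lemma maxExpDensity_mul_pow_eq_sum {M₁ M₂ : ℕ} (hM₂ : 0 < M₂) (a b : ℝ) {y : ℝ} (hy : 0 < y) :
    maxExpDensity M₂ y * (1 - exp (-(a + b / y))) ^ M₁ =
      ∑ q ∈ Finset.range M₂, ∑ p ∈ Finset.range (M₁ + 1),
        M₂ * ((M₂ - 1).choose q : ℝ) * (M₁.choose p : ℝ) * (-1) ^ (q + p) * exp (-p * a) *
          exp (-((q + 1) * y) - p * b / y) := by
  obtain ⟨n, rfl⟩ := Nat.exists_eq_add_one_of_ne_zero hM₂.ne'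
  rw [maxExpDensity_of_pos hy, add_tsub_cancel_right, one_sub_pow_eq_sum, one_sub_pow_eq_sum]
  simp only [Finset.mul_sum, Finset.sum_mul]
  rw [Finset.sum_comm]
  refine Finset.sum_congr rfl fun q _ => ?_
  refine Finset.sum_congr rfl fun p _ => ?_
  have hexp : exp (-p * a) * exp (-((q + 1) * y) - p * b / y) =
      exp (q * -y) * exp (-y) * exp (p * -(a + b / y)) := by
    simp only [← exp_add]
    ring_nf
  rw [← exp_nat_mul, ← exp_nat_mul, pow_add]
  linear_combination
    (-((n + 1 : ℕ) : ℝ) * (-1) ^ q * (n.choose q) * (-1) ^ p * (M₁.choose p)) * hexp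

lemma maxExpDensity_mul_pow_nonneg (M₁ M₂ : ℕ) {a b : ℝ} (ha : 0 ≤ a) (hb : 0 ≤ b) (y : ℝ) :
    0 ≤ maxExpDensity M₂ y * (1 - exp (-(a + b / y))) ^ M₁ := by
  rcases le_or_gt y 0 with hy | hy
  · rw [maxExpDensity_of_nonpos hy, zero_mul]
  · exact mul_nonneg (maxExpDensity_nonneg M₂ y)
      (pow_nonneg (one_sub_exp_neg_nonneg (by positivity)) M₁)

lemma ofReal_maxExpDensity_mul_withDensity_Iic {M₁ : ℕ} (hM₁ : 0 < M₁) (M₂ : ℕ) {a b : ℝ}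
    (ha : 0 ≤ a) (hb : 0 ≤ b) (y : ℝ) :
    ENNReal.ofReal (maxExpDensity M₂ y) *
        volume.withDensity (fun x => ENNReal.ofReal (maxExpDensity M₁ x)) (Iic (a + b / y)) =
      ENNReal.ofReal (maxExpDensity M₂ y * (1 - exp (-(a + b / y))) ^ M₁) := by
  rcases le_or_gt y 0 with hy | hy
  · simp [maxExpDensity_of_nonpos hy]
  · rw [withDensity_maxExpDensity_Iic hM₁ (by positivity),
      ← ENNReal.ofReal_mul (maxExpDensity_nonneg M₂ y)]

lemma integral_maxExpDensity_mul_pow {M₁ M₂ : ℕ} (hM₂ : 0 < M₂) (a : ℝ) {b : ℝ} (hb : 0 < b) :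
    ∫ y, maxExpDensity M₂ y * (1 - exp (-(a + b / y))) ^ M₁ =
      2 * (M₂ : ℝ) * ∑ q ∈ Finset.range M₂,
        ((-1 : ℝ) ^ q * ((M₂ - 1).choose q : ℝ) / (2 * ((q : ℝ) + 1)) +
          ∑ p ∈ Finset.Icc 1 M₁,
            ((M₂ - 1).choose q : ℝ) * (M₁.choose p : ℝ) * (-1 : ℝ) ^ (q + p) *
              Real.exp (-(p : ℝ) * a) * Real.sqrt ((p : ℝ) * b / ((q : ℝ) + 1)) *
              besselK1 (2 * Real.sqrt ((p : ℝ) * ((q : ℝ) + 1) * b))) := by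
  have hterm (q p : ℕ) : IntegrableOn (fun y => exp (-((q + 1) * y) - p * b / y)) (Ioi 0) :=
    integrableOn_exp_neg_mul_sub_div (by positivity) (by positivity)
  rw [← setIntegral_eq_integral_of_forall_compl_eq_zero (s := Ioi 0) fun y hy => by
      rw [maxExpDensity_of_nonpos (not_lt.1 hy), zero_mul],
    setIntegral_congr_fun measurableSet_Ioi fun y hy => maxExpDensity_mul_pow_eq_sum hM₂ a b hy,
    integral_finsetSum _ fun q _ => integrable_finsetSum _ fun p _ => (hterm q p).const_mul _,
    Finset.mul_sum]
  refine Finset.sum_congr rfl fun q _ => ?_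
  rw [integral_finsetSum _ fun p _ => (hterm q p).const_mul _, Nat.range_succ_eq_Icc_zero,
    ← Finset.add_sum_Ioc_eq_sum_Icc (Nat.zero_le _), ← Finset.Icc_add_one_left_eq_Ioc, zero_add,
    mul_add, Finset.mul_sum]
  congr 1
  · rw [integral_const_mul]
    simp only [Nat.cast_zero, zero_mul, zero_div, sub_zero, neg_zero, exp_zero,
      integral_exp_neg_mul_Ioi (by positivity : (0 : ℝ) < q + 1), Nat.choose_zero_right,
      add_zero, Nat.cast_one, mul_one]
    field_simp
  · refine Finset.sum_congr rfl fun p hp => ?_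
    have hp : (0 : ℝ) < p := by exact_mod_cast (Finset.mem_Icc.1 hp).1
    rw [integral_const_mul, integral_exp_neg_mul_sub_div (by positivity) (by positivity),
      show ((q : ℝ) + 1) * (p * b) = p * (q + 1) * b by ring, pow_add]
    ring

/-- Closed form of P(X ≤ a + b/Y) where X is the max of M₁ i.i.d. Exp(1) variables and
Y the max of M₂ i.i.d. Exp(1) variables, X, Y independent. -/
theorem stmt_16 {Ω : Type*} [MeasurableSpace Ω] (P : Measure Ω) [IsProbabilityMeasure P]
    (M₁ M₂ : ℕ) (hM₁ : 0 < M₁) (hM₂ : 0 < M₂)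
    (X Y : Ω → ℝ) (hX : Measurable X) (hY : Measurable Y)
    (hXpdf : ∀ᵐ x ∂(volume : Measure ℝ),
      pdf X P volume x = ENNReal.ofReal
        (if 0 < x then (M₁ : ℝ) * (1 - Real.exp (-x)) ^ (M₁ - 1) * Real.exp (-x) else 0))
    (hYpdf : ∀ᵐ y ∂(volume : Measure ℝ),
      pdf Y P volume y = ENNReal.ofReal
        (if 0 < y then (M₂ : ℝ) * (1 - Real.exp (-y)) ^ (M₂ - 1) * Real.exp (-y) else 0))
    (hindep : IndepFun X Y P) (a b : ℝ) (ha : 0 < a) (hb : 0 < b) :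
    (P {ω | X ω ≤ a + b / Y ω}).toReal =
      2 * (M₂ : ℝ) * ∑ q ∈ Finset.range M₂,
        ((-1 : ℝ) ^ q * ((M₂ - 1).choose q : ℝ) / (2 * ((q : ℝ) + 1)) +
          ∑ p ∈ Finset.Icc 1 M₁,
            ((M₂ - 1).choose q : ℝ) * (M₁.choose p : ℝ) * (-1 : ℝ) ^ (q + p) *
              Real.exp (-(p : ℝ) * a) * Real.sqrt ((p : ℝ) * b / ((q : ℝ) + 1)) *
              besselK1 (2 * Real.sqrt ((p : ℝ) * ((q : ℝ) + 1) * b))) := by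
  have hlawX := map_eq_withDensity_of_pdf_ae_eq hX.aemeasurable
    (lintegral_ofReal_maxExpDensity hM₁) hXpdf
  have hlawY := map_eq_withDensity_of_pdf_ae_eq hY.aemeasurable
    (lintegral_ofReal_maxExpDensity hM₂) hYpdf
  rw [hindep.measure_le_comp_eq_lintegral_mul hX hY (h := fun y => a + b / y) (by fun_prop)
    (by fun_prop) hlawY, hlawX]
  simp_rw [ofReal_maxExpDensity_mul_withDensity_Iic hM₁ M₂ ha.le hb.le]
  rw [← integral_eq_lintegral_of_nonneg_ae
      (.of_forall (maxExpDensity_mul_pow_nonneg M₁ M₂ ha.le hb.le)) (by fun_prop),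
    integral_maxExpDensity_mul_pow hM₂ a hb]
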